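/- Let G be a finitely generated one-ended group with finite generating set S and Cayley graph X = Γ(G,S), and let r > 0. Let B_r denote the union of the bounded connected components of X∖B(r) and suppose B_r ≠ ∅. Then V_0^X(r) = max{d_S(e,x) : x ∈ B_r}; moreover there exist a bounded connected component A_r of X∖B(r) and an element a ∈ A_r with V_0^X(r) = d_S(e,a). -/

import Mathlib

/-- The Cayley graph of a group `G` with respect to a generating set `S`. -/
def cayleyGraph {G : Type*} [Group G] (S : Set G) : SimpleGraph G where
  Adj x y := x ≠ y ∧ (x⁻¹ * y ∈ S ∨ y⁻¹ * x ∈ S)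
  symm := ⟨fun x y h => ⟨h.1.symm, h.2.symm⟩⟩
  loopless := ⟨fun x h => h.1 rfl⟩

/-- The ball of radius `r` centered at the identity in the Cayley graph. -/
def cayleyBall {G : Type*} [Group G] (S : Set G) (r : ℕ) : Set G :=
  {x : G | (cayleyGraph S).dist 1 x ≤ r}

/-- `x` and `y` can be joined by a path in the Cayley graph avoiding the ball `B(r)`. -/
def JoinedOutside {G : Type*} [Group G] (S : Set G) (r : ℕ) (x y : G) : Prop :=
  ∃ p : (cayleyGraph S).Walk x y, ∀ v ∈ p.support, v ∉ cayleyBall S r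

/-- The end depth function `V₀(r)`: the least `k` such that any two points outside `B(k)`
can be joined by a path avoiding `B(r)`. -/
noncomputable def endDepth {G : Type*} [Group G] (S : Set G) (r : ℕ) : ℕ :=
  sInf {k : ℕ | ∀ x y : G, x ∉ cayleyBall S k → y ∉ cayleyBall S k → JoinedOutside S r x y}

/-- The union `B_r` of the bounded (i.e. finite) connected components of the complement
of the ball `B(r)` in the Cayley graph. -/
def boundedPart {G : Type*} [Group G] (S : Set G) (r : ℕ) : Set G :=
  {x : G | ∃ h : x ∈ (cayleyBall S r)ᶜ,
    ((((cayleyGraph S).induce (cayleyBall S r)ᶜ).connectedComponentMk ⟨x, h⟩).supp).Finite}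

/-- `A` is (the vertex set of) a connected component of the subgraph of `H`
induced on the set `W`. -/
def IsCompOf {G : Type*} (H : SimpleGraph G) (W : Set G) (A : Set G) : Prop :=
  ∃ C : (H.induce W).ConnectedComponent, A = Subtype.val '' C.supp

/-- The number of ends of the Cayley graph of `G` w.r.t. `S`. -/
noncomputable def numEnds {G : Type*} [Group G] (S : Set G) : ℕ∞ :=
  ⨆ (K : Set G) (_ : K.Finite),
    ENat.card {C : (cayleyGraph S).ComponentCompl K // C.supp.Infinite}

/-! Since `B(r)` is finite and the Cayley graph is locally finite, `X ∖ B(r)` has finitely many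
components; hence `B_r` is finite and `M = max {d(e,x) | x ∈ B_r}` exists, and one-endedness
leaves a single infinite component. Beyond `B(M)` every point lies in that infinite component,
so any two such points are joined outside `B(r)` and `V₀(r) ≤ M`. Conversely, if `k` has this
property and a point `a ∈ B_r` lay outside `B(k)`, then `a` would be joined outside `B(r)` to
points arbitrarily far away, which cannot all lie in the finite component of `a`; so `M ≤ k`. -/

open SimpleGraph

namespace SimpleGraph

variable {V : Type*} {H : SimpleGraph V} {K : Set V}

theorem ComponentCompl.supp_eq_image_val (C : H.ComponentCompl K) :
    C.supp = Subtype.val '' ConnectedComponent.supp C := by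
  ext v
  constructor
  · rintro ⟨hv, rfl⟩
    exact ⟨⟨v, hv⟩, rfl, rfl⟩
  · rintro ⟨⟨v, hv⟩, rfl, rfl⟩
    exact ⟨hv, rfl⟩

theorem componentComplMk_eq_iff_exists_walk {x y : V} (hx : x ∉ K) (hy : y ∉ K) :
    H.componentComplMk hx = H.componentComplMk hy ↔
      ∃ p : H.Walk x y, ∀ v ∈ p.support, v ∉ K := by
  constructor
  · intro h
    obtain ⟨q⟩ := ConnectedComponent.exact h
    refine ⟨q.map (Embedding.induce Kᶜ).toHom, fun v hv => ?_⟩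
    change v ∈ (q.map (Embedding.induce Kᶜ).toHom).support at hv
    rw [Walk.support_map, List.mem_map] at hv
    obtain ⟨⟨w, hw⟩, -, rfl⟩ := hv
    exact hw
  · rintro ⟨p, hp⟩
    exact ConnectedComponent.sound ⟨p.induce Kᶜ hp⟩

theorem Connected.finite_setOf_dist_le (hconn : H.Connected)
    (hfin : ∀ v, (H.neighborSet v).Finite) (u : V) (n : ℕ) :
    {x | H.dist u x ≤ n}.Finite := by
  induction n with
  | zero => simp [hconn.dist_eq_zero_iff]
  | succ n ih =>
    refine (ih.union (ih.biUnion fun y _ => hfin y)).subset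
      fun x (hx : H.dist u x ≤ n + 1) => ?_
    by_cases hxn : H.dist u x ≤ n
    · exact Or.inl hxn
    have hxu : x ≠ u := by
      rintro rfl
      simp at hxn
    obtain ⟨p, hp⟩ := hconn.exists_walk_length_eq_dist x u
    obtain ⟨y, hxy, q, rfl⟩ := Walk.exists_eq_cons_of_ne hxu p
    have hy : H.dist u y ≤ n := by
      have hq : q.length + 1 = H.dist u x := by simpa [dist_comm] using hp
      have := dist_le q
      rw [dist_comm] at this
      omega
    exact Or.inr (Set.mem_biUnion hy hxy.symm)

end SimpleGraph

section CayleyGraph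

variable {G : Type*} [Group G] {S : Set G}

theorem cayleyGraph_reachable_mul (x : G) {s : G} (hs : s ∈ S) :
    (cayleyGraph S).Reachable x (x * s) := by
  by_cases hx : x = x * s
  · rw [← hx]
  · exact Adj.reachable ⟨hx, Or.inl (by simpa using hs)⟩

theorem cayleyGraph_connected (hgen : Subgroup.closure S = ⊤) : (cayleyGraph S).Connected := by
  suffices h : ∀ x : G, (cayleyGraph S).Reachable 1 x from
    Connected.mk fun x y => (h x).symm.trans (h y)
  intro x
  induction (hgen ▸ Subgroup.mem_top x : x ∈ Subgroup.closure S)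
    using Subgroup.closure_induction_right with
  | one => rfl
  | mul_right x _ s hs ih => exact ih.trans (cayleyGraph_reachable_mul x hs)
  | mul_inv_cancel x _ s hs ih =>
    refine ih.trans (Reachable.symm ?_)
    simpa using cayleyGraph_reachable_mul (x * s⁻¹) hs

theorem cayleyGraph_neighborSet_finite (hS : S.Finite) (v : G) :
    ((cayleyGraph S).neighborSet v).Finite := by
  refine ((hS.union hS.inv).image (v * ·)).subset
    fun w ⟨_, hw⟩ => ⟨v⁻¹ * w, ?_, by simp⟩
  rcases hw with hw | hw
  · exact Or.inl hw
  · exact Or.inr (by simpa using hw)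

theorem cayleyBall_finite (hS : S.Finite) (hgen : Subgroup.closure S = ⊤) (n : ℕ) :
    (cayleyBall S n).Finite :=
  (cayleyGraph_connected hgen).finite_setOf_dist_le (cayleyGraph_neighborSet_finite hS) 1 n

theorem notMem_cayleyBall_iff {x : G} {n : ℕ} :
    x ∉ cayleyBall S n ↔ n < (cayleyGraph S).dist 1 x := by
  simp [cayleyBall]

theorem cayleyBall_mono {m n : ℕ} (h : m ≤ n) : cayleyBall S m ⊆ cayleyBall S n :=
  fun _ (hx : _ ≤ m) => show _ ≤ n from hx.trans h

theorem numEnds_eq_zero [Finite G] : numEnds S = 0 := by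
  simp [numEnds, Set.toFinite, ENat.card_eq_zero_iff_empty, isEmpty_subtype]

theorem infinite_of_numEnds_ne_zero (h : numEnds S ≠ 0) : Infinite G := by
  contrapose! h
  exact numEnds_eq_zero

theorem subsingleton_infinite_componentCompl (h : numEnds S ≤ 1) {K : Set G} (hK : K.Finite) :
    Subsingleton {C : (cayleyGraph S).ComponentCompl K // C.supp.Infinite} :=
  (ENat.card_le_one_iff_subsingleton _).mp (le_trans (le_iSup₂_of_le K hK le_rfl) h)

end CayleyGraph

section BoundedPart

variable {G : Type*} [Group G] {S : Set G} {r : ℕ}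

/-- `k ∈ N(r)`, so that `endDepth S r = sInf {k | IsEndDepthBound S r k}`. -/
def IsEndDepthBound (S : Set G) (r k : ℕ) : Prop :=
  ∀ x y : G, x ∉ cayleyBall S k → y ∉ cayleyBall S k → JoinedOutside S r x y

theorem joinedOutside_iff_componentComplMk_eq {x y : G} (hx : x ∉ cayleyBall S r)
    (hy : y ∉ cayleyBall S r) :
    JoinedOutside S r x y ↔
      (cayleyGraph S).componentComplMk hx = (cayleyGraph S).componentComplMk hy :=
  (componentComplMk_eq_iff_exists_walk hx hy).symm

theorem mem_boundedPart_iff {x : G} :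
    x ∈ boundedPart S r ↔
      ∃ hx : x ∉ cayleyBall S r, ((cayleyGraph S).componentComplMk hx).supp.Finite := by
  simp only [boundedPart, ComponentCompl.supp_eq_image_val,
    Set.finite_image_iff Subtype.val_injective.injOn]
  rfl

theorem boundedPart_finite (hS : S.Finite) (hgen : Subgroup.closure S = ⊤) (r : ℕ) :
    (boundedPart S r).Finite := by
  let _ : (cayleyGraph S).LocallyFinite := fun v => (cayleyGraph_neighborSet_finite hS v).fintype
  have : Fact (cayleyGraph S).Preconnected := ⟨(cayleyGraph_connected hgen).preconnected⟩
  have hball := cayleyBall_finite hS hgen r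
  have : Finite ((cayleyGraph S).ComponentCompl (cayleyBall S r)) := by
    rw [← hball.coe_toFinset]
    exact componentCompl_finite _
  refine ((Set.toFinite {C : (cayleyGraph S).ComponentCompl (cayleyBall S r) | C.supp.Finite})
    |>.biUnion fun C hC => hC).subset fun x hx => ?_
  obtain ⟨hx, hfin⟩ := mem_boundedPart_iff.mp hx
  exact Set.mem_biUnion hfin ((cayleyGraph S).componentComplMk_mem hx)

theorem isEndDepthBound_of_boundedPart_subset_cayleyBall
    (hsub : Subsingleton
      {C : (cayleyGraph S).ComponentCompl (cayleyBall S r) // C.supp.Infinite})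
    {M : ℕ} (hrM : r ≤ M) (hM : boundedPart S r ⊆ cayleyBall S M) :
    IsEndDepthBound S r M := by
  intro x y hx hy
  have infinite_comp : ∀ z ∉ cayleyBall S M,
      ∃ hz : z ∉ cayleyBall S r, ((cayleyGraph S).componentComplMk hz).supp.Infinite :=
    fun z hz => ⟨fun h => hz (cayleyBall_mono hrM h),
      fun hfin => hz (hM (mem_boundedPart_iff.mpr ⟨_, hfin⟩))⟩
  obtain ⟨hx', hxinf⟩ := infinite_comp x hx
  obtain ⟨hy', hyinf⟩ := infinite_comp y hy
  exact (joinedOutside_iff_componentComplMk_eq hx' hy').mpr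
    (Subtype.ext_iff.mp (hsub.elim ⟨_, hxinf⟩ ⟨_, hyinf⟩))

theorem boundedPart_subset_cayleyBall [Infinite G] {k : ℕ} (hball : (cayleyBall S k).Finite)
    (hk : IsEndDepthBound S r k) : boundedPart S r ⊆ cayleyBall S k := by
  intro a ha
  by_contra hak
  obtain ⟨haK, hfin⟩ := mem_boundedPart_iff.mp ha
  obtain ⟨y, hy⟩ := (hball.union hfin).infinite_compl.nonempty
  simp only [Set.mem_compl_iff, Set.mem_union, not_or] at hy
  obtain ⟨p, hp⟩ := hk a y hak hy.1
  have hyK : y ∉ cayleyBall S r := hp y p.end_mem_support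
  exact hy.2 ⟨hyK, ((joinedOutside_iff_componentComplMk_eq haK hyK).mp ⟨p, hp⟩).symm⟩

theorem endDepth_le {k : ℕ} (hk : IsEndDepthBound S r k) : endDepth S r ≤ k :=
  Nat.sInf_le hk

theorem isEndDepthBound_endDepth {k : ℕ} (hk : IsEndDepthBound S r k) :
    IsEndDepthBound S r (endDepth S r) :=
  Nat.sInf_mem (s := {k | IsEndDepthBound S r k}) ⟨k, hk⟩

end BoundedPart

theorem endDepth_eq_max_boundedPart_general {G : Type*} [Group G] (S : Set G) (hS : S.Finite)
    (hgen : Subgroup.closure S = ⊤) (hone : numEnds S = 1) (r : ℕ)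
    (hne : (boundedPart S r).Nonempty) :
    endDepth S r = sSup ((fun x => (cayleyGraph S).dist 1 x) '' boundedPart S r) ∧
    ∃ A : Set G, IsCompOf (cayleyGraph S) (cayleyBall S r)ᶜ A ∧ A.Finite ∧
      ∃ a ∈ A, endDepth S r = (cayleyGraph S).dist 1 a := by
  have : Infinite G := infinite_of_numEnds_ne_zero (hone ▸ one_ne_zero)
  obtain ⟨a, haB, hmax⟩ :=
    Set.exists_max_image _ (fun x => (cayleyGraph S).dist 1 x) (boundedPart_finite hS hgen r) hne
  set M := (cayleyGraph S).dist 1 a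
  have hsSup : sSup ((fun x => (cayleyGraph S).dist 1 x) '' boundedPart S r) = M :=
    IsGreatest.csSup_eq ⟨Set.mem_image_of_mem _ haB, Set.forall_mem_image.mpr hmax⟩
  obtain ⟨haK, hafin⟩ := haB
  have hM : IsEndDepthBound S r M := isEndDepthBound_of_boundedPart_subset_cayleyBall
    (subsingleton_infinite_componentCompl hone.le (cayleyBall_finite hS hgen r))
    (notMem_cayleyBall_iff.mp haK).le hmax
  have hED : endDepth S r = M := le_antisymm (endDepth_le hM)
    (boundedPart_subset_cayleyBall (cayleyBall_finite hS hgen _)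
      (isEndDepthBound_endDepth hM) ⟨haK, hafin⟩)
  exact ⟨hED.trans hsSup.symm, _, ⟨_, rfl⟩, hafin.image _, a, ⟨⟨a, haK⟩, rfl, rfl⟩,
    hED⟩

/-- For a finitely generated one ended group, if the union `B_r` of the bounded components of
`X ∖ B(r)` is nonempty, then `V₀(r) = max {d(e,x) | x ∈ B_r}`; moreover this maximum is
attained on some bounded connected component `A_r` of `X ∖ B(r)`. -/
theorem endDepth_eq_max_boundedPart {G : Type*} [Group G] (S : Set G) (hS : S.Finite)
    (hgen : Subgroup.closure S = ⊤) (hone : numEnds S = 1) (r : ℕ) (hr : 0 < r)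
    (hne : (boundedPart S r).Nonempty) :
    endDepth S r = sSup ((fun x => (cayleyGraph S).dist 1 x) '' boundedPart S r) ∧
    ∃ A : Set G, IsCompOf (cayleyGraph S) (cayleyBall S r)ᶜ A ∧ A.Finite ∧
      ∃ a ∈ A, endDepth S r = (cayleyGraph S).dist 1 a :=
  endDepth_eq_max_boundedPart_general S hS hgen hone r hne
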